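/- arXiv:1407.8086 — 3 statements merged into one kernel-verified Lean document; each statement's English description precedes it below -/
import Mathlib

section
/- Fix integers s, t and a positive integer r with gcd(r,t) = 1. Then there exists a positive integer m such that r divides f_m(s,t). -/
/-- Generalized Fibonacci sequence: f 0 = 0, f 1 = 1, f (n+2) = s * f (n+1) + t * f n. -/
def genFib (s t : ℤ) : ℕ → ℤ
  | 0 => 0
  | 1 => 1
  | n + 2 => s * genFib s t (n + 1) + t * genFib s t n

/-!
Reduce modulo `r`. Since `t` is a unit in `ZMod r`, the shift map
`(x, y) ↦ (y, s y + t x)` is injective on the finite set `ZMod r × ZMod r`, hence a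
permutation; so the pair `(f₀, f₁) = (0, 1)` recurs after some `m > 0` steps, giving
`f_m ≡ 0 mod r`.
-/

section GenFibStep

variable {R : Type*} [CommRing R]

def genFibStep (s t : R) (p : R × R) : R × R :=
  (p.2, s * p.2 + t * p.1)

theorem genFibStep_injective (s : R) {t : R} (ht : IsUnit t) :
    Function.Injective (genFibStep s t) := by
  rintro ⟨x₁, y₁⟩ ⟨x₂, y₂⟩ h
  obtain ⟨rfl, h₂⟩ := Prod.mk.inj h
  have : t * x₁ = t * x₂ := by linear_combination h₂
  rw [ht.mul_left_cancel this]

theorem genFibStep_iterate_zero_one (s t : ℤ) (n : ℕ) :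
    (genFibStep (s : R) t)^[n] (0, 1) = ((genFib s t n : R), (genFib s t (n + 1) : R)) := by
  induction n with
  | zero => simp [genFib]
  | succ n ih =>
    rw [Function.iterate_succ_apply', ih, genFibStep, genFib]
    push_cast
    rfl

theorem exists_pos_genFib_cast_eq_zero [Finite R] (s t : ℤ) (ht : IsUnit (t : R)) :
    ∃ m : ℕ, 0 < m ∧ (genFib s t m : R) = 0 := by
  obtain ⟨m, hm, hper⟩ := Function.mem_periodicPts.mp
    ((genFibStep_injective (s : R) ht).mem_periodicPts ((0 : R), (1 : R)))
  refine ⟨m, hm, ?_⟩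
  have hfst := congrArg Prod.fst hper.eq
  rwa [genFibStep_iterate_zero_one] at hfst

end GenFibStep

/-- If gcd(r, t) = 1 then some positive index term is divisible by r. -/
theorem exists_rank (s t : ℤ) (r : ℕ) (hr : 0 < r) (hcop : IsCoprime (r : ℤ) t) :
    ∃ m : ℕ, 0 < m ∧ (r : ℤ) ∣ genFib s t m := by
  have : NeZero r := ⟨hr.ne'⟩
  have ht : IsUnit (t : ZMod r) := by
    simpa [isCoprime_zero_left] using hcop.map (Int.castRingHom (ZMod r))
  obtain ⟨m, hm, hfib⟩ := exists_pos_genFib_cast_eq_zero s t ht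
  exact ⟨m, hm, (ZMod.intCast_zmod_eq_zero_iff_dvd _ _).mp hfib⟩
end

section
/- For every integer s and every n ≥ 1, gcd(f_n(s,-1), g_n(s,-1)) divides 2. -/
/-- Generalized Lucas sequence for t = -1: g 0 = 2, g 1 = s, g (n+2) = s * g (n+1) - g n. -/
def genLucas (s : ℤ) : ℕ → ℤ
  | 0 => 2
  | 1 => s
  | n + 2 => s * genLucas s (n + 1) - genLucas s n

/-!
Writing `f = genFib s (-1)`, one has `g n = 2 f (n+1) - s f n` and the Cassini-type identity
`f (n+1)^2 - s f (n+1) f n + f n^2 = 1`, so consecutive terms of `f` are coprime. A common divisor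
`d` of `f n` and `g n` therefore divides `2 f (n+1)` and is coprime to `f (n+1)`, hence divides `2`.
-/

theorem genFib_add_two (s t : ℤ) (n : ℕ) :
    genFib s t (n + 2) = s * genFib s t (n + 1) + t * genFib s t n := rfl

theorem genLucas_add_two (s : ℤ) (n : ℕ) :
    genLucas s (n + 2) = s * genLucas s (n + 1) - genLucas s n := rfl

theorem genLucas_eq_two_mul_genFib_succ_sub (s : ℤ) :
    ∀ n : ℕ, genLucas s n = 2 * genFib s (-1) (n + 1) - s * genFib s (-1) n
  | 0 => by simp [genLucas, genFib]
  | 1 => by simp [genLucas, genFib]; ring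
  | n + 2 => by
    rw [genLucas_add_two, genLucas_eq_two_mul_genFib_succ_sub s (n + 1),
      genLucas_eq_two_mul_genFib_succ_sub s n, genFib_add_two s _ (n + 1), genFib_add_two s _ n]
    ring

theorem genFib_cassini (s t : ℤ) (n : ℕ) :
    genFib s t (n + 1) ^ 2 - s * genFib s t (n + 1) * genFib s t n - t * genFib s t n ^ 2
      = (-t) ^ n := by
  induction n with
  | zero => simp [genFib]
  | succ n ih =>
    rw [genFib_add_two, pow_succ (-t), ← ih]
    ring

theorem isCoprime_genFib_genFib_succ (s : ℤ) {t : ℤ} (ht : IsUnit t) (n : ℕ) :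
    IsCoprime (genFib s t n) (genFib s t (n + 1)) := by
  obtain ⟨u, hu⟩ := ht.neg.pow n
  refine ⟨↑u⁻¹ * (-t * genFib s t n), ↑u⁻¹ * (genFib s t (n + 1) - s * genFib s t n), ?_⟩
  linear_combination ↑u⁻¹ * ((genFib_cassini s t n).trans hu.symm) + u.inv_mul

theorem dvd_two_of_dvd_genFib_of_dvd_genLucas {s d : ℤ} {n : ℕ} (hd_fib : d ∣ genFib s (-1) n)
    (hd_lucas : d ∣ genLucas s n) : d ∣ 2 := by
  have hd_two_mul : d ∣ 2 * genFib s (-1) (n + 1) := by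
    have h := dvd_add hd_lucas (hd_fib.mul_left s)
    rwa [genLucas_eq_two_mul_genFib_succ_sub, sub_add_cancel] at h
  have hd_coprime : IsCoprime d (genFib s (-1) (n + 1)) :=
    (isCoprime_genFib_genFib_succ s isUnit_one.neg n).of_isCoprime_of_dvd_left hd_fib
  exact hd_coprime.dvd_of_dvd_mul_right hd_two_mul

theorem gcd_fib_lucas_dvd_two_general (s : ℤ) (n : ℕ) :
    Int.gcd (genFib s (-1) n) (genLucas s n) ∣ 2 :=
  Int.ofNat_dvd_right.mp <|
    dvd_two_of_dvd_genFib_of_dvd_genLucas (Int.gcd_dvd_left _ _) (Int.gcd_dvd_right _ _)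

/-- gcd(f_n(s,-1), g_n(s,-1)) divides 2. -/
theorem gcd_fib_lucas_dvd_two (s : ℤ) (n : ℕ) (hn : 1 ≤ n) :
    Int.gcd (genFib s (-1) n) (genLucas s n) ∣ 2 :=
  gcd_fib_lucas_dvd_two_general s n
end

section
/- For all natural numbers k and all n ≥ 1: f_{kn}(s,-1) ≡ k · f_{n+1}(s,-1)^{k-1} · f_n(s,-1) (mod f_n(s,-1)^2) and f_{kn+1}(s,-1) ≡ f_{n+1}(s,-1)^k (mod f_n(s,-1)^2). -/
lemma genFib_add (s t : ℤ) (m : ℕ) : ∀ n, genFib s t (m + n + 1) =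
    genFib s t (m + 1) * genFib s t (n + 1) + t * genFib s t m * genFib s t n := by
  intro n
  induction n using Nat.strong_induction_on with
  | _ n ih =>
    match n with
    | 0 => simp [genFib]
    | 1 =>
      show genFib s t (m + 2) = _
      rw [show genFib s t (m + 2) = s * genFib s t (m + 1) + t * genFib s t m from rfl]
      simp [genFib]
      ring
    | n + 2 =>
      have h1 := ih (n + 1) (by omega)
      have h2 := ih n (by omega)
      rw [show m + (n + 2) + 1 = (m + n + 1) + 2 from by ring]
      rw [show genFib s t ((m + n + 1) + 2) =
          s * genFib s t (m + n + 2) + t * genFib s t (m + n + 1) from rfl]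
      rw [show m + n + 2 = m + (n + 1) + 1 from by ring, h1, h2]
      rw [show genFib s t (n + 2 + 1) =
          s * genFib s t (n + 2) + t * genFib s t (n + 1) from rfl,
        show genFib s t (n + 2) = s * genFib s t (n + 1) + t * genFib s t n from rfl]
      ring

/-- f_{kn} ≡ k f_{n+1}^(k-1) f_n and f_{kn+1} ≡ f_{n+1}^k modulo f_n². -/
theorem fib_mul_congr (s : ℤ) (k n : ℕ) (hn : 1 ≤ n) :
    genFib s (-1) (k * n) ≡
        (k : ℤ) * (genFib s (-1) (n + 1)) ^ (k - 1) * genFib s (-1) n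
        [ZMOD (genFib s (-1) n) ^ 2] ∧
      genFib s (-1) (k * n + 1) ≡ (genFib s (-1) (n + 1)) ^ k
        [ZMOD (genFib s (-1) n) ^ 2] := by
  obtain ⟨m, rfl⟩ : ∃ m, n = m + 1 := ⟨n - 1, by omega⟩
  clear hn
  set a := genFib s (-1) (m + 2) with ha
  set b := genFib s (-1) (m + 1) with hb
  set c := genFib s (-1) m with hc
  have hab : a = s * b - c := by rw [ha, hb, hc]; show s * _ + (-1) * _ = _; ring
  induction k with
  | zero => simp [genFib]
  | succ k ih =>
    obtain ⟨ih1, ih2⟩ := ih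
    have e1 : (k + 1) * (m + 1) = k * (m + 1) + m + 1 := by ring
    have e2 : (k + 1) * (m + 1) + 1 = k * (m + 1) + (m + 1) + 1 := by ring
    have hA := genFib_add s (-1) (k * (m + 1)) m
    have hB := genFib_add s (-1) (k * (m + 1)) (m + 1)
    rw [show m + 1 + 1 = m + 2 from rfl] at hB
    rw [← hb, ← hc] at hA
    rw [← ha, ← hb] at hB
    constructor
    · rw [e1, hA]
      have step : genFib s (-1) (k * (m + 1) + 1) * b +
          (-1) * genFib s (-1) (k * (m + 1)) * c ≡
          a ^ k * b + (-1) * ((k : ℤ) * a ^ (k - 1) * b) * c [ZMOD b ^ 2] :=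
        (ih2.mul_right b).add ((ih1.mul_left (-1)).mul_right c)
      refine step.trans (Int.ModEq.symm (Int.modEq_iff_dvd.mpr ?_))
      match k with
      | 0 => exact ⟨0, by norm_num⟩
      | j + 1 =>
        refine ⟨-(((j : ℤ) + 1) * s * a ^ j), ?_⟩
        push_cast
        have : a = s * b - c := hab
        rw [this]
        ring
    · rw [e2, hB]
      have step : genFib s (-1) (k * (m + 1) + 1) * a +
          (-1) * genFib s (-1) (k * (m + 1)) * b ≡
          a ^ k * a + (-1) * ((k : ℤ) * a ^ (k - 1) * b) * b [ZMOD b ^ 2] :=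
        (ih2.mul_right a).add ((ih1.mul_left (-1)).mul_right b)
      refine step.trans (Int.ModEq.symm (Int.modEq_iff_dvd.mpr ?_))
      refine ⟨-((k : ℤ) * a ^ (k - 1)), ?_⟩
      ring
end
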